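/- Verification of the stiff order conditions for EPIRK4s3A: with s = 3, α₂₁ = 1/2, g₂₁ = 1/2, ψ₂₁ = φ₁ (so P₂₁ = 1, P₂₂ = 1/2, P₂₃ = 1/6), α₃₁ = 2/3, g₃₁ = 2/3, ψ₃₁ = φ₁ (so P₃₁ = 1, P₃₂ = 1/2, P₃₃ = 1/6), and b₂(z) = 32φ₃(z) − 144φ₄(z), b₃(z) = −(27/2)φ₃(z) + 81φ₄(z), the conditions C1: b₂(z)α₂₁²P₂₁² + b₃(z)α₃₁²P₃₁² = 2φ₃(z); C2: b₂(z)α₂₁²g₂₁P₂₁P₂₂ + b₃(z)α₃₁²g₃₁P₃₁P₃₂ = 3φ₄(z); and C3: b₂(z)α₂₁³P₂₁³ + b₃(z)α₃₁³P₃₁³ = 6φ₄(z) hold identically in z. -/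
import Mathlib

noncomputable def phi (k : ℕ) (z : ℂ) : ℂ := ∑' j : ℕ, z ^ j / (Nat.factorial (j + k) : ℂ)

theorem epirk4s3a_order_conditions :
    ∀ z : ℂ,
      (32 * phi 3 z - 144 * phi 4 z) * (1/2)^2 * 1^2
        + (-(27/2) * phi 3 z + 81 * phi 4 z) * (2/3)^2 * 1^2 = 2 * phi 3 z ∧
      (32 * phi 3 z - 144 * phi 4 z) * (1/2)^2 * (1/2) * 1 * (1/2)
        + (-(27/2) * phi 3 z + 81 * phi 4 z) * (2/3)^2 * (2/3) * 1 * (1/2) = 3 * phi 4 z ∧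
      (32 * phi 3 z - 144 * phi 4 z) * (1/2)^3 * 1^3
        + (-(27/2) * phi 3 z + 81 * phi 4 z) * (2/3)^3 * 1^3 = 6 * phi 4 z := by
  intro z
  exact ⟨by ring, by ring, by ring⟩
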